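/- A countable discrete group G is amenable at infinity if and only if there exists a sequence of maps bⁿ : G → P(G) such that (1) for every n there is a finite set F_n ⊆ G with supp(bⁿ_g) ⊆ F_n for all g ∈ G, and (2) for every g ∈ G, lim_{n→∞} sup_{h∈G} ‖g·bⁿ_h − bⁿ_{g·h}‖₁ = 0. -/

import Mathlib

open MeasureTheory Filter Topology

/-- The space `P(G)` of probability measures on a (countable discrete) group `G`,
viewed inside `ℓ¹(G)`; it carries the weak topology (of pointwise convergence),
which on `P(G)` coincides with the `ℓ¹`-norm topology. -/
abbrev ProbOn (G : Type) : Type :=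
  {f : G → ℝ // (∀ g : G, 0 ≤ f g) ∧ HasSum f 1}

/-- The left translation action of `G` on `P(G)`: `(g • p) h = p (g⁻¹ h)`. -/
noncomputable instance ProbOn.instSMul (G : Type) [Group G] : SMul G (ProbOn G) where
  smul g p := ⟨fun h => p.1 (g⁻¹ * h), fun h => p.2.1 _, by
    have := ((Equiv.mulLeft g⁻¹).hasSum_iff (f := p.1) (a := 1)).mpr p.2.2
    simpa [Function.comp_def] using this⟩

/-- The `ℓ¹` distance between two elements of `P(G)`. -/
noncomputable def l1dist {G : Type} (p q : ProbOn G) : ℝ :=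
  ∑' g : G, |p.1 g - q.1 g|

/-- An action of a (discrete) group `G` by homeomorphisms on a topological space `X` is
amenable if there is a sequence of continuous maps `bⁿ : X → P(G)` such that for every
`g ∈ G`, `lim_n sup_{x ∈ X} ‖g • bⁿ_x − bⁿ_{g•x}‖₁ = 0`. -/
def AmenableActionOn (G : Type) [Group G] (X : Type) [TopologicalSpace X]
    [MulAction G X] : Prop :=
  (∀ g : G, Continuous fun x : X => g • x) ∧
  ∃ b : ℕ → C(X, ProbOn G), ∀ g : G,
    Tendsto (fun n : ℕ => ⨆ x : X, l1dist (g • (b n) x) ((b n) (g • x)))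
      atTop (𝓝 0)

/-- A group `G` is amenable at infinity (topologically amenable) if it admits an amenable
action on some nonempty compact Hausdorff space. -/
def AmenableAtInfinity (G : Type) [Group G] : Prop :=
  ∃ (X : Type) (tX : TopologicalSpace X) (aX : MulAction G X),
    @CompactSpace X tX ∧ @T2Space X tX ∧ Nonempty X ∧
      @AmenableActionOn G _ X tX aX

/-!
Forward direction: given an amenable action on a compact space `X` and a point `x₀`, compactness
gives for each `n` one finite set `Fₙ` carrying mass `> 1 - εₙ` of every `bⁿ_x`; conditioning
`bⁿ_{h • x₀}` on `Fₙ` moves it by at most `2 εₙ` in `ℓ¹`, so these conditioned measures form a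
finitely supported system.

Backward direction: a family `G → P(G)` supported in a fixed finite set `F` takes values in a
compact simplex, so it extends continuously to the Stone–Čech compactification `βG`, on which
`G` acts by left translation. The `ℓ¹` distance is lower semicontinuous for pointwise
convergence, so the defect of equivariance at a point of `βG` is bounded by its supremum over `G`.
-/

namespace ProbOn

open scoped Classical

variable {G : Type}

lemma summable_abs_sub (p q : ProbOn G) : Summable fun h => |p.1 h - q.1 h| :=
  (p.2.2.summable.add q.2.2.summable).of_nonneg_of_le (fun _ => abs_nonneg _) fun h => by
    simpa only [abs_of_nonneg (p.2.1 h), abs_of_nonneg (q.2.1 h)] using abs_sub (p.1 h) (q.1 h)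

lemma apply_le_one (p : ProbOn G) (h : G) : p.1 h ≤ 1 :=
  le_hasSum p.2.2 h fun _ _ => p.2.1 _

lemma sum_le_one (p : ProbOn G) (F : Finset G) : ∑ h ∈ F, p.1 h ≤ 1 :=
  sum_le_hasSum F (fun h _ => p.2.1 h) p.2.2

lemma continuous_apply (k : G) : Continuous fun p : ProbOn G => p.1 k :=
  (_root_.continuous_apply k).comp continuous_subtype_val

lemma continuous_const_smul [Group G] (g : G) : Continuous fun p : ProbOn G => g • p :=
  (continuous_pi fun h => continuous_apply (g⁻¹ * h)).subtype_mk _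

lemma hasSum_one_of_tendsto {ι : Type} {l : Filter ι} [l.NeBot] {q : ι → ProbOn G}
    {f : G → ℝ} (F : Finset G) (hq : ∀ i k, (q i).1 k ≠ 0 → k ∈ F)
    (hf : ∀ k, Tendsto (fun i => (q i).1 k) l (𝓝 (f k))) : HasSum f 1 := by
  have hq_zero : ∀ i, ∀ k ∉ F, (q i).1 k = 0 := fun i k hk => not_not.mp (mt (hq i k) hk)
  have hf_zero : ∀ k ∉ F, f k = 0 := fun k hk =>
    tendsto_nhds_unique (hf k) (by simp only [hq_zero _ k hk]; exact tendsto_const_nhds)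
  have hq_sum : ∀ i, ∑ k ∈ F, (q i).1 k = 1 := fun i =>
    (hasSum_sum_of_ne_finset_zero (hq_zero i)).unique (q i).2.2
  have hf_sum : ∑ k ∈ F, f k = 1 :=
    tendsto_nhds_unique (tendsto_finsetSum F fun k _ => hf k)
      (by simp only [hq_sum]; exact tendsto_const_nhds)
  exact hf_sum ▸ hasSum_sum_of_ne_finset_zero hf_zero

/-- The conditional probability `p( · | F)`. -/
noncomputable def condOn (F : Finset G) (p : ProbOn G) (hp : 0 < ∑ h ∈ F, p.1 h) : ProbOn G :=
  ⟨fun h => if h ∈ F then p.1 h / ∑ k ∈ F, p.1 k else 0,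
    fun h => ite_nonneg (div_nonneg (p.2.1 h) hp.le) le_rfl, by
      have hsum := hasSum_sum_of_ne_finset_zero (L := SummationFilter.unconditional G)
        (f := fun h => if h ∈ F then p.1 h / ∑ k ∈ F, p.1 k else 0) fun h hh => if_neg hh
      rwa [Finset.sum_congr rfl fun h hh => if_pos hh, ← Finset.sum_div, div_self hp.ne'] at hsum⟩

lemma mem_of_condOn_apply_ne_zero {F : Finset G} {p : ProbOn G} {hp : 0 < ∑ h ∈ F, p.1 h} {h : G}
    (hh : (condOn F p hp).1 h ≠ 0) : h ∈ F := by
  by_contra hF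
  exact hh (if_neg hF)

end ProbOn

open ProbOn

section L1Dist

open scoped Classical

variable {G : Type}

lemma l1dist_nonneg (p q : ProbOn G) : 0 ≤ l1dist p q :=
  tsum_nonneg fun _ => abs_nonneg _

lemma l1dist_comm (p q : ProbOn G) : l1dist p q = l1dist q p := by
  simp only [l1dist, abs_sub_comm]

lemma l1dist_triangle (p q r : ProbOn G) : l1dist p r ≤ l1dist p q + l1dist q r := by
  rw [l1dist, l1dist, l1dist, ← (summable_abs_sub p q).tsum_add (summable_abs_sub q r)]
  exact (summable_abs_sub p r).tsum_le_tsum (fun h => abs_sub_le _ _ _)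
    ((summable_abs_sub p q).add (summable_abs_sub q r))

lemma l1dist_le_two (p q : ProbOn G) : l1dist p q ≤ 2 := by
  have hsum : HasSum (fun h => p.1 h + q.1 h) 2 := by
    simpa [one_add_one_eq_two] using p.2.2.add q.2.2
  refine hsum.tsum_eq ▸ (summable_abs_sub p q).tsum_le_tsum (fun h => ?_) hsum.summable
  simpa only [abs_of_nonneg (p.2.1 h), abs_of_nonneg (q.2.1 h)] using abs_sub (p.1 h) (q.1 h)

lemma bddAbove_range_l1dist {ι : Type} (p q : ι → ProbOn G) :
    BddAbove (Set.range fun i => l1dist (p i) (q i)) :=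
  ⟨2, by rintro _ ⟨i, rfl⟩; exact l1dist_le_two _ _⟩

lemma l1dist_smul [Group G] (g : G) (p q : ProbOn G) : l1dist (g • p) (g • q) = l1dist p q :=
  (Equiv.mulLeft g⁻¹).tsum_eq fun h => |p.1 h - q.1 h|

lemma l1dist_le_of_tendsto {ι : Type} {l : Filter ι} [l.NeBot] {p q : ι → ProbOn G}
    {p₀ q₀ : ProbOn G} {C : ℝ} (hp : Tendsto p l (𝓝 p₀)) (hq : Tendsto q l (𝓝 q₀))
    (hC : ∀ i, l1dist (p i) (q i) ≤ C) : l1dist p₀ q₀ ≤ C := by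
  refine Real.tsum_le_of_sum_le (fun _ => abs_nonneg _) fun S => ?_
  have hlim : Tendsto (fun i => ∑ k ∈ S, |(p i).1 k - (q i).1 k|) l
      (𝓝 (∑ k ∈ S, |p₀.1 k - q₀.1 k|)) :=
    tendsto_finsetSum S fun k _ =>
      ((((continuous_apply k).tendsto _).comp hp).sub (((continuous_apply k).tendsto _).comp hq)).abs
  refine le_of_tendsto hlim (Eventually.of_forall fun i => ?_)
  exact ((summable_abs_sub _ _).sum_le_tsum S fun k _ => abs_nonneg _).trans (hC i)

lemma l1dist_condOn (F : Finset G) (p : ProbOn G) (hp : 0 < ∑ h ∈ F, p.1 h) :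
    l1dist p (condOn F p hp) = 2 * (1 - ∑ h ∈ F, p.1 h) := by
  set s := ∑ h ∈ F, p.1 h
  -- on `F` the difference is `p h / s - p h = p h + p h * (s⁻¹ - 2)`, off `F` it is `p h`
  have hpoint : ∀ h, |p.1 h - (condOn F p hp).1 h| =
      p.1 h + if h ∈ F then p.1 h * (s⁻¹ - 2) else 0 := by
    intro h
    by_cases hh : h ∈ F
    · have hle : p.1 h ≤ p.1 h / s :=
        (le_div_iff₀ hp).mpr (mul_le_of_le_one_right (p.2.1 h) (sum_le_one p F))
      simp only [condOn, if_pos hh]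
      rw [abs_sub_comm, abs_of_nonneg (sub_nonneg.mpr hle), div_eq_mul_inv]
      ring
    · simp [condOn, hh, abs_of_nonneg (p.2.1 h)]
  have hF : HasSum (fun h => if h ∈ F then p.1 h * (s⁻¹ - 2) else 0) (1 - 2 * s) := by
    have hsum : ∑ h ∈ F, (if h ∈ F then p.1 h * (s⁻¹ - 2) else 0) = 1 - 2 * s := by
      rw [Finset.sum_congr rfl fun h hh => if_pos hh, ← Finset.sum_mul, mul_sub,
        mul_inv_cancel₀ hp.ne']
      ring
    exact hsum ▸ hasSum_sum_of_ne_finset_zero fun h hh => if_neg hh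
  rw [l1dist, funext hpoint, (p.2.2.add hF).tsum_eq]
  ring

lemma l1dist_smul_condOn_le [Group G] (g : G) {F F' : Finset G} {p q : ProbOn G}
    (hp : 0 < ∑ h ∈ F, p.1 h) (hq : 0 < ∑ h ∈ F', q.1 h) :
    l1dist (g • condOn F p hp) (condOn F' q hq) ≤
      l1dist (g • p) q + 2 * (1 - ∑ h ∈ F, p.1 h) + 2 * (1 - ∑ h ∈ F', q.1 h) := by
  calc l1dist (g • condOn F p hp) (condOn F' q hq)
      ≤ l1dist (g • condOn F p hp) (g • p) + l1dist (g • p) q + l1dist q (condOn F' q hq) :=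
        (l1dist_triangle _ _ _).trans (add_le_add_left (l1dist_triangle _ _ _) _)
    _ = _ := by rw [l1dist_smul, l1dist_comm, l1dist_condOn, l1dist_condOn]; ring

end L1Dist

lemma exists_finset_forall_lt_sum {X : Type} [TopologicalSpace X] [CompactSpace X]
    {G : Type} (b : C(X, ProbOn G)) {ε : ℝ} (hε : 0 < ε) :
    ∃ F : Finset G, ∀ x, 1 - ε < ∑ h ∈ F, (b x).1 h := by
  let U : Finset G → Set X := fun F => {x | 1 - ε < ∑ h ∈ F, (b x).1 h}
  have hU_open : ∀ F, IsOpen (U F) := fun F => isOpen_lt continuous_const <|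
    continuous_finsetSum F fun h _ => (continuous_apply h).comp b.continuous
  have hU_cover : Set.univ ⊆ ⋃ F, U F := fun x _ =>
    Set.mem_iUnion.mpr ((b x).2.2.eventually (eventually_gt_nhds (by linarith))).exists
  have hU_mono : Monotone U := fun F F' hFF' x hx =>
    hx.trans_le (Finset.sum_le_sum_of_subset_of_nonneg hFF' fun h _ _ => (b x).2.1 h)
  obtain ⟨F, hF⟩ := isCompact_univ.elim_directed_cover U hU_open hU_cover hU_mono.directed_le
  exact ⟨F, fun x => hF (Set.mem_univ x)⟩

section Forward

variable {G : Type} [Group G]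

lemma exists_finitely_supported_near_orbit {X : Type} [MulAction G X] (b : X → ProbOn G)
    (x₀ : X) {ε : ℝ} (hε : ε ≤ 1) {F : Finset G} (hF : ∀ x, 1 - ε < ∑ h ∈ F, (b x).1 h) :
    ∃ c : G → ProbOn G, (∀ h k, (c h).1 k ≠ 0 → k ∈ F) ∧
      ∀ g h, l1dist (g • c h) (c (g * h)) ≤ l1dist (g • b (h • x₀)) (b (g • h • x₀)) + 4 * ε := by
  have hpos : ∀ x, 0 < ∑ h ∈ F, (b x).1 h := fun x => by linarith [hF x]
  refine ⟨fun h => condOn F (b (h • x₀)) (hpos _), fun h k => mem_of_condOn_apply_ne_zero,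
    fun g h => ?_⟩
  dsimp only
  have := l1dist_smul_condOn_le g (hpos (h • x₀)) (hpos ((g * h) • x₀))
  rw [mul_smul] at this ⊢
  linarith [hF (h • x₀), hF (g • h • x₀)]

theorem AmenableActionOn.exists_finitely_supported_system {X : Type} [TopologicalSpace X]
    [CompactSpace X] [Nonempty X] [MulAction G X] (hX : AmenableActionOn G X) :
    ∃ b : ℕ → G → ProbOn G,
      (∀ n : ℕ, ∃ F : Finset G, ∀ g h : G, (b n g).1 h ≠ 0 → h ∈ F) ∧
      ∀ g : G, Tendsto (fun n : ℕ => ⨆ h : G, l1dist (g • b n h) (b n (g * h))) atTop (𝓝 0) := by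
  obtain ⟨-, b, hb⟩ := hX
  obtain ⟨x₀⟩ := ‹Nonempty X›
  let ε : ℕ → ℝ := fun n => 1 / ((n : ℝ) + 1)
  have hε_pos : ∀ n, 0 < ε n := fun n => Nat.one_div_pos_of_nat
  have hε_le : ∀ n, ε n ≤ 1 := fun n =>
    (div_le_one (by positivity)).mpr (by linarith [(n.cast_nonneg : (0 : ℝ) ≤ n)])
  choose F hF using fun n => exists_finset_forall_lt_sum (b n) (hε_pos n)
  choose c hc_supp hc using fun n =>
    exists_finitely_supported_near_orbit (b n) x₀ (hε_le n) (hF n)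
  refine ⟨c, fun n => ⟨F n, hc_supp n⟩, fun g => ?_⟩
  have hbound : ∀ n, ⨆ h, l1dist (g • c n h) (c n (g * h)) ≤
      (⨆ x, l1dist (g • b n x) (b n (g • x))) + 4 * ε n := fun n =>
    ciSup_le fun h => (hc n g h).trans <| add_le_add_left
      (le_ciSup (bddAbove_range_l1dist (fun x => g • b n x) (fun x => b n (g • x))) (h • x₀)) _
  refine squeeze_zero (fun n => Real.iSup_nonneg fun h => l1dist_nonneg _ _) hbound ?_
  simpa [ε] using (hb g).add (tendsto_one_div_add_atTop_nhds_zero_nat.const_mul 4)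

end Forward

section Backward

namespace Ultrafilter

variable {G α : Type} [Monoid G] [MulAction G α]

instance instMulAction : MulAction G (Ultrafilter α) where
  smul g U := U.map (g • ·)
  one_smul U := by
    change U.map _ = U
    simp only [one_smul]
    exact map_id U
  mul_smul g g' U := by
    change U.map _ = (U.map _).map _
    rw [map_map]
    congr 1
    funext x
    exact mul_smul g g' x

lemma smul_def (g : G) (U : Ultrafilter α) : g • U = U.map (g • ·) := rfl

lemma continuous_map {β : Type} (f : α → β) : Continuous (Ultrafilter.map f) := by
  refine ultrafilterBasis_is_basis.continuous_iff.mpr ?_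
  rintro _ ⟨s, rfl⟩
  exact ultrafilter_isOpen_basic (f ⁻¹' s)

end Ultrafilter

lemma exists_continuous_extension {α G : Type} (F : Finset G) (q : α → ProbOn G)
    (hq : ∀ a k, (q a).1 k ≠ 0 → k ∈ F) :
    ∃ B : C(Ultrafilter α, ProbOn G), ∀ U : Ultrafilter α, Tendsto q U (𝓝 (B U)) := by
  let e : α → G → Set.Icc (0 : ℝ) 1 := fun a k => ⟨(q a).1 k, (q a).2.1 k, apply_le_one _ k⟩
  let E := Ultrafilter.extend e
  have he : ∀ U : Ultrafilter α, Tendsto e U (𝓝 (E U)) := fun U => by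
    simpa only [Tendsto, Ultrafilter.coe_map] using ultrafilter_extend_eq_iff.mp (rfl : E U = _)
  have hval : ∀ k, Continuous fun v : G → Set.Icc (0 : ℝ) 1 => (v k : ℝ) := fun k =>
    continuous_subtype_val.comp (_root_.continuous_apply k)
  have hE : ∀ U : Ultrafilter α, ∀ k, Tendsto (fun a => (q a).1 k) U (𝓝 (E U k : ℝ)) :=
    fun U k => ((hval k).tendsto (E U)).comp (he U)
  let B : Ultrafilter α → ProbOn G := fun U =>
    ⟨fun k => E U k, fun k => (E U k).2.1, hasSum_one_of_tendsto F hq (hE U)⟩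
  refine ⟨⟨B, ?_⟩, fun U => tendsto_subtype_rng.mpr (tendsto_pi_nhds.mpr (hE U))⟩
  exact (continuous_pi fun k => (hval k).comp (continuous_ultrafilter_extend e)).subtype_mk _

variable {G : Type} [Group G]

theorem amenableActionOn_ultrafilter {b : ℕ → G → ProbOn G}
    (hb_supp : ∀ n : ℕ, ∃ F : Finset G, ∀ g h : G, (b n g).1 h ≠ 0 → h ∈ F)
    (hb : ∀ g : G, Tendsto (fun n : ℕ => ⨆ h : G, l1dist (g • b n h) (b n (g * h))) atTop (𝓝 0)) :
    AmenableActionOn G (Ultrafilter G) := by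
  choose F hF using hb_supp
  choose B hB using fun n => exists_continuous_extension (F n) (b n) (hF n)
  refine ⟨fun g => Ultrafilter.continuous_map _, B, fun g => ?_⟩
  refine squeeze_zero (fun n => Real.iSup_nonneg fun U => l1dist_nonneg _ _)
    (fun n => ciSup_le fun U => ?_) (hb g)
  have hleft : Tendsto (fun h => g • b n h) U (𝓝 (g • B n U)) :=
    ((continuous_const_smul g).tendsto _).comp (hB n U)
  have hright : Tendsto (fun h => b n (g * h)) U (𝓝 (B n (g • U))) := by
    simpa [Ultrafilter.smul_def, tendsto_map'_iff, Function.comp_def] using hB n (g • U)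
  exact l1dist_le_of_tendsto hleft hright fun h =>
    le_ciSup (bddAbove_range_l1dist (fun h => g • b n h) (fun h => b n (g * h))) h

end Backward

theorem amenable_at_infinity_iff_finitely_supported_system_general
    (G : Type) [Group G] :
    AmenableAtInfinity G ↔
      ∃ b : ℕ → G → ProbOn G,
        (∀ n : ℕ, ∃ F : Finset G, ∀ g h : G, (b n g).1 h ≠ 0 → h ∈ F) ∧
        (∀ g : G,
          Tendsto (fun n : ℕ => ⨆ h : G, l1dist (g • b n h) (b n (g * h)))
            atTop (𝓝 0)) := by
  constructor
  · rintro ⟨X, _, _, _, -, _, hX⟩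
    exact hX.exists_finitely_supported_system
  · rintro ⟨b, hb_supp, hb⟩
    exact ⟨Ultrafilter G, _, _, inferInstance, inferInstance, ⟨pure 1⟩,
      amenableActionOn_ultrafilter hb_supp hb⟩

/-- Higson–Roe characterization: a countable discrete group `G` is amenable at infinity if
and only if there is a sequence of maps `bⁿ : G → P(G)` with uniformly finite supports and
asymptotic equivariance: `lim_n sup_{h ∈ G} ‖g • bⁿ_h − bⁿ_{gh}‖₁ = 0` for every `g`. -/
theorem amenable_at_infinity_iff_finitely_supported_system
    (G : Type) [Group G] [Countable G] :
    AmenableAtInfinity G ↔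
      ∃ b : ℕ → G → ProbOn G,
        (∀ n : ℕ, ∃ F : Finset G, ∀ g h : G, (b n g).1 h ≠ 0 → h ∈ F) ∧
        (∀ g : G,
          Tendsto (fun n : ℕ => ⨆ h : G, l1dist (g • b n h) (b n (g * h)))
            atTop (𝓝 0)) :=
  amenable_at_infinity_iff_finitely_supported_system_general G
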